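/- arXiv:2404.09859 — 4 statements merged into one kernel-verified Lean document; each statement's English description precedes it below -/
import Mathlib

section
/- With the setup of the previous statement (v₁, v₂ isotropic with ⟨v₁,v₂⟩ = 1/2, u a unit vector orthogonal to v₁ and v₂; x = v₁ - v₂ + r·u, y = α v₁ - α⁻¹ v₂ + i s·u, α > 0, α ≠ 1, r,s ∈ (-1,1) nonzero), define q = x - (⟨x,y⟩/|⟨x,y⟩|)·y. Then ⟨q,q⟩ = -2 + r² + s² - √((α²+1)² + 4α²r²s²)/α, and this quantity is strictly negative. -/
/-- The Hermitian form of signature `(-,+,+)` on `ℂ³`. -/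
noncomputable def herm (x y : Fin 3 → ℂ) : ℂ :=
  -(x 0 * star (y 0)) + x 1 * star (y 1) + x 2 * star (y 2)

/-!
Expanding `⟨q, q⟩` for `q = x - c • y` with the unimodular phase `c = ⟨x,y⟩ / |⟨x,y⟩|` gives
`⟨x,x⟩ + ⟨y,y⟩ - 2 |⟨x,y⟩|`, since both cross terms equal `|⟨x,y⟩|`. In the basis `v₁, v₂, u` one
reads off `⟨x,x⟩ = r² - 1`, `⟨y,y⟩ = s² - 1` and `⟨x,y⟩ = -(α + α⁻¹)/2 - i r s`, whose modulus is
`√((α² + 1)² + 4α²r²s²) / (2α)`. Negativity is then clear from `r², s² < 1`.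
-/

section Sesquilinear

variable (a b c : Fin 3 → ℂ) (t : ℂ)

@[simp]
lemma herm_add_left : herm (a + b) c = herm a c + herm b c := by
  simp only [herm, Pi.add_apply]; ring

@[simp]
lemma herm_add_right : herm c (a + b) = herm c a + herm c b := by
  simp only [herm, Pi.add_apply, star_add]; ring

@[simp]
lemma herm_sub_left : herm (a - b) c = herm a c - herm b c := by
  simp only [herm, Pi.sub_apply]; ring

@[simp]
lemma herm_sub_right : herm c (a - b) = herm c a - herm c b := by
  simp only [herm, Pi.sub_apply, star_sub]; ring

@[simp]
lemma herm_smul_left : herm (t • a) c = t * herm a c := by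
  simp only [herm, Pi.smul_apply, smul_eq_mul]; ring

@[simp]
lemma herm_smul_right : herm c (t • a) = star t * herm c a := by
  simp only [herm, Pi.smul_apply, smul_eq_mul, star_mul']; ring

lemma herm_conj_symm : star (herm b a) = herm a b := by
  simp only [herm, star_add, star_neg, star_mul', star_star]; ring

end Sesquilinear

lemma herm_sub_phase_smul_self (x y : Fin 3 → ℂ) (hxy : herm x y ≠ 0) :
    herm (x - (herm x y / (‖herm x y‖ : ℂ)) • y) (x - (herm x y / (‖herm x y‖ : ℂ)) • y) =
      herm x x + herm y y - 2 * ‖herm x y‖ := by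
  have hnorm : (‖herm x y‖ : ℂ) ≠ 0 := by exact_mod_cast norm_ne_zero_iff.mpr hxy
  have hsq : herm x y * star (herm x y) = (‖herm x y‖ : ℂ) ^ 2 := Complex.mul_conj' _
  simp only [herm_sub_left, herm_sub_right, herm_smul_left, herm_smul_right, star_div₀,
    Complex.star_def, Complex.conj_ofReal, ← herm_conj_symm y x] at hsq ⊢
  field_simp
  linear_combination (herm y y - 2 * (‖herm x y‖ : ℂ)) * hsq

section Basis

variable {v₁ v₂ u : Fin 3 → ℂ}
  (h11 : herm v₁ v₁ = 0) (h22 : herm v₂ v₂ = 0) (h12 : herm v₁ v₂ = 1 / 2)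
  (huu : herm u u = 1) (hu1 : herm u v₁ = 0) (hu2 : herm u v₂ = 0)
include h11 h22 h12 huu hu1 hu2

lemma herm_linearCombination (a b c a' b' c' : ℂ) :
    herm (a • v₁ + b • v₂ + c • u) (a' • v₁ + b' • v₂ + c' • u) =
      (a * star b' + b * star a') / 2 + c * star c' := by
  have h21 : herm v₂ v₁ = 1 / 2 := by rw [← herm_conj_symm, h12]; norm_num
  have h1u : herm v₁ u = 0 := by rw [← herm_conj_symm, hu1, star_zero]
  have h2u : herm v₂ u = 0 := by rw [← herm_conj_symm, hu2, star_zero]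
  simp only [herm_add_left, herm_add_right, herm_smul_left, herm_smul_right,
    h11, h22, h12, h21, huu, hu1, hu2, h1u, h2u]
  ring

end Basis

lemma norm_neg_half_add_inv_add_mul_I (α r s : ℝ) (hα : 0 < α) :
    ‖((-(α + α⁻¹) / 2 : ℝ) : ℂ) + ((-(r * s) : ℝ) : ℂ) * Complex.I‖ =
      √((α ^ 2 + 1) ^ 2 + 4 * α ^ 2 * r ^ 2 * s ^ 2) / (2 * α) := by
  rw [Complex.norm_add_mul_I, eq_div_iff (by positivity), ← Real.sqrt_sq (by positivity : 0 ≤ 2 * α),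
    ← Real.sqrt_mul (by positivity)]
  congr 1
  field_simp
  ring

theorem stmt_2_general (v₁ v₂ u : Fin 3 → ℂ)
    (h11 : herm v₁ v₁ = 0) (h22 : herm v₂ v₂ = 0) (h12 : herm v₁ v₂ = 1 / 2)
    (huu : herm u u = 1) (hu1 : herm u v₁ = 0) (hu2 : herm u v₂ = 0)
    (α r s : ℝ) (hα : 0 < α)
    (hr1 : -1 < r) (hr2 : r < 1)
    (hs1 : -1 < s) (hs2 : s < 1)
    (x y q : Fin 3 → ℂ)
    (hx : x = v₁ - v₂ + (r : ℂ) • u)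
    (hy : y = (α : ℂ) • v₁ - ((α : ℂ))⁻¹ • v₂ + (Complex.I * (s : ℂ)) • u)
    (hq : q = x - (herm x y / (‖herm x y‖ : ℂ)) • y) :
    herm q q = ((-2 + r ^ 2 + s ^ 2 -
        Real.sqrt ((α ^ 2 + 1) ^ 2 + 4 * α ^ 2 * r ^ 2 * s ^ 2) / α : ℝ) : ℂ) ∧
      (-2 + r ^ 2 + s ^ 2 -
        Real.sqrt ((α ^ 2 + 1) ^ 2 + 4 * α ^ 2 * r ^ 2 * s ^ 2) / α : ℝ) < 0 := by
  have hx' : x = (1 : ℂ) • v₁ + (-1 : ℂ) • v₂ + (r : ℂ) • u := by rw [hx]; module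
  have hy' : y = (α : ℂ) • v₁ + (-(α : ℂ)⁻¹) • v₂ + (Complex.I * s) • u := by rw [hy]; module
  have herm_lc := herm_linearCombination h11 h22 h12 huu hu1 hu2
  have hxx : herm x x = r ^ 2 - 1 := by
    rw [hx', herm_lc]; simp only [Complex.star_def, map_neg, map_one, Complex.conj_ofReal]; ring
  have hyy : herm y y = s ^ 2 - 1 := by
    rw [hy', herm_lc]
    simp only [Complex.star_def, map_neg, map_mul, map_inv₀, Complex.conj_ofReal, Complex.conj_I]
    have hα0 : (α : ℂ) ≠ 0 := by exact_mod_cast hα.ne'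
    linear_combination (-1 : ℂ) * mul_inv_cancel₀ hα0 - (s : ℂ) ^ 2 * Complex.I_sq
  have hxy : herm x y = ((-(α + α⁻¹) / 2 : ℝ) : ℂ) + ((-(r * s) : ℝ) : ℂ) * Complex.I := by
    rw [hx', hy', herm_lc]
    simp only [Complex.star_def, map_neg, map_mul, map_inv₀, Complex.conj_ofReal, Complex.conj_I]
    push_cast
    ring
  have hnorm := norm_neg_half_add_inv_add_mul_I α r s hα
  rw [← hxy] at hnorm
  have hxy0 : herm x y ≠ 0 := norm_pos_iff.mp (by rw [hnorm]; positivity)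
  refine ⟨?_, ?_⟩
  · rw [hq, herm_sub_phase_smul_self x y hxy0, hxx, hyy, hnorm]
    push_cast
    field_simp
    ring
  · have : 0 ≤ √((α ^ 2 + 1) ^ 2 + 4 * α ^ 2 * r ^ 2 * s ^ 2) / α := by positivity
    nlinarith

theorem stmt_2 (v₁ v₂ u : Fin 3 → ℂ)
    (h11 : herm v₁ v₁ = 0) (h22 : herm v₂ v₂ = 0) (h12 : herm v₁ v₂ = 1 / 2)
    (huu : herm u u = 1) (hu1 : herm u v₁ = 0) (hu2 : herm u v₂ = 0)
    (α r s : ℝ) (hα : 0 < α) (hα1 : α ≠ 1)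
    (hr : r ≠ 0) (hr1 : -1 < r) (hr2 : r < 1)
    (hs : s ≠ 0) (hs1 : -1 < s) (hs2 : s < 1)
    (x y q : Fin 3 → ℂ)
    (hx : x = v₁ - v₂ + (r : ℂ) • u)
    (hy : y = (α : ℂ) • v₁ - ((α : ℂ))⁻¹ • v₂ + (Complex.I * (s : ℂ)) • u)
    (hq : q = x - (herm x y / (‖herm x y‖ : ℂ)) • y) :
    herm q q = ((-2 + r ^ 2 + s ^ 2 -
        Real.sqrt ((α ^ 2 + 1) ^ 2 + 4 * α ^ 2 * r ^ 2 * s ^ 2) / α : ℝ) : ℂ) ∧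
      (-2 + r ^ 2 + s ^ 2 -
        Real.sqrt ((α ^ 2 + 1) ^ 2 + 4 * α ^ 2 * r ^ 2 * s ^ 2) / α : ℝ) < 0 :=
  stmt_2_general v₁ v₂ u h11 h22 h12 huu hu1 hu2 α r s hα hr1 hr2 hs1 hs2 x y q hx hy hq
end

section
/- Let W be a complex 2-dimensional Hermitian space with positive-definite inner product and let R(t₁,t₂)s = ⟨t₂,t₁⟩s + ⟨s,t₁⟩t₂ − ⟨t₁,t₂⟩s − ⟨s,t₂⟩t₁. Let t, n be an orthonormal basis, a ∈ ℝ, b ∈ ℂ with a² + |b|² = 1, t₁ = t, t₂ = i a t + b n. If R(t₁,t₂)t₂ is a real linear combination of t₁ and t₂, then a = 0 or b = 0. -/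
/-- The algebraic curvature tensor of `H²_ℂ` (Anan'in–Grossi); the paper's
pairing `⟨a,b⟩` corresponds to Mathlib's `inner b a`. -/
noncomputable def curv {W : Type*} [NormedAddCommGroup W] [InnerProductSpace ℂ W]
    (t₁ t₂ s : W) : W :=
  (inner ℂ t₁ t₂ : ℂ) • s + (inner ℂ t₁ s : ℂ) • t₂ - (inner ℂ t₂ t₁ : ℂ) • s -
    (inner ℂ t₂ s : ℂ) • t₁

/-! `curv x y y` is a combination of `x` and `y` whose `y`-coefficient `2⟪x,y⟫ - conj ⟪x,y⟫`
has imaginary part `3 Im ⟪x,y⟫`; for `x = t`, `y = i a t + b n` this is `3a`. When `b ≠ 0` the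
`y`-coefficient of any combination of `x` and `y` is detected by pairing with `n`, which is
orthogonal to `x` but not to `y`; so a real `y`-coefficient forces `a = 0`. -/

open scoped InnerProductSpace

section

variable {W : Type*} [NormedAddCommGroup W] [InnerProductSpace ℂ W]

theorem curv_self_right (x y : W) :
    curv x y y = (2 * ⟪x, y⟫_ℂ - ⟪y, x⟫_ℂ) • y - ⟪y, y⟫_ℂ • x := by
  simp only [curv, sub_smul, two_mul, add_smul]

theorem im_inner_eq_zero_of_curv_self_right_eq {x y n : W} (hnx : ⟪n, x⟫_ℂ = 0)
    (hny : ⟪n, y⟫_ℂ ≠ 0) {c : ℂ} {d : ℝ} (h : curv x y y = c • x + (d : ℂ) • y) :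
    (⟪x, y⟫_ℂ).im = 0 := by
  have hcoeff : 2 * ⟪x, y⟫_ℂ - ⟪y, x⟫_ℂ = d := by
    have h' := congrArg (fun v => ⟪n, v⟫_ℂ) h
    simp only [curv_self_right, inner_sub_right, inner_add_right, inner_smul_right, hnx,
      mul_zero, sub_zero, zero_add] at h'
    exact mul_right_cancel₀ hny h'
  rw [← inner_conj_symm y x] at hcoeff
  have him := congrArg Complex.im hcoeff
  simp only [Complex.sub_im, Complex.conj_im, Complex.ofReal_im, Complex.mul_im,
    Complex.re_ofNat, Complex.im_ofNat] at him
  linarith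

end

theorem stmt_5_general {W : Type*} [NormedAddCommGroup W] [InnerProductSpace ℂ W]
    (t n : W) (ht : ‖t‖ = 1) (hn : ‖n‖ = 1) (htn : (inner ℂ t n : ℂ) = 0)
    (a : ℝ) (b : ℂ)
    (t₁ t₂ : W) (ht₁ : t₁ = t) (ht₂ : t₂ = (Complex.I * (a : ℂ)) • t + b • n)
    (c d : ℝ) (hreal : curv t₁ t₂ t₂ = (c : ℂ) • t₁ + (d : ℂ) • t₂) :
    a = 0 ∨ b = 0 := by
  subst t₁ t₂
  by_cases hb : b = 0
  · exact Or.inr hb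
  left
  have hnt : ⟪n, t⟫_ℂ = 0 := inner_eq_zero_symm.mp htn
  have htt : ⟪t, t⟫_ℂ = 1 := by simp [inner_self_eq_norm_sq_to_K, ht]
  have hnn : ⟪n, n⟫_ℂ = 1 := by simp [inner_self_eq_norm_sq_to_K, hn]
  have hnt₂ : ⟪n, (Complex.I * a) • t + b • n⟫_ℂ ≠ 0 := by
    simpa only [inner_add_right, inner_smul_right, hnt, hnn, mul_zero, mul_one, zero_add]
      using hb
  have him := im_inner_eq_zero_of_curv_self_right_eq hnt hnt₂ hreal
  simp only [inner_add_right, inner_smul_right, htt, htn, mul_zero, mul_one, add_zero] at him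
  simpa using him

theorem stmt_5 {W : Type*} [NormedAddCommGroup W] [InnerProductSpace ℂ W]
    (hdim : Module.finrank ℂ W = 2)
    (t n : W) (ht : ‖t‖ = 1) (hn : ‖n‖ = 1) (htn : (inner ℂ t n : ℂ) = 0)
    (a : ℝ) (b : ℂ) (hab : a ^ 2 + ‖b‖ ^ 2 = 1)
    (t₁ t₂ : W) (ht₁ : t₁ = t) (ht₂ : t₂ = (Complex.I * (a : ℂ)) • t + b • n)
    (c d : ℝ) (hreal : curv t₁ t₂ t₂ = (c : ℂ) • t₁ + (d : ℂ) • t₂) :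
    a = 0 ∨ b = 0 :=
  stmt_5_general t n ht hn htn a b t₁ t₂ ht₁ ht₂ c d hreal
end

section
/- Let W be a complex 2-dimensional Hermitian inner product space with R(t₁,t₂)s = ⟨t₂,t₁⟩s + ⟨s,t₁⟩t₂ − ⟨t₁,t₂⟩s − ⟨s,t₂⟩t₁. Let t₁, t₂ be unit vectors with ⟨t₁,t₂⟩ = 0, let a,b ∈ ℝ, and t₃ = i a t₁ + i b t₂. If both R(t₁,t₂)t₃ and R(t₁,t₃)t₁ lie in the real span of {t₁, t₂, t₃}, then a = b = 0 (hence t₃ = 0). Consequently, there is no 3-dimensional real subspace S of W that is closed under R and orthonormal-decomposable in this way; i.e., H²_ℂ admits no 3-dimensional curvature-invariant tangent subspace. -/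
theorem eq_zero_of_eq_mul_of_neg_eq_mul {a b c : ℝ} (ha : a = c * b) (hb : -b = c * a) :
    a = 0 ∧ b = 0 := by
  have hsq : a * (1 + c ^ 2) = 0 := by linear_combination ha - c * hb
  have ha₀ : a = 0 := by
    rcases mul_eq_zero.mp hsq with h | h
    · exact h
    · nlinarith [sq_nonneg c]
  refine ⟨ha₀, ?_⟩
  simpa [ha₀] using hb

section Orthonormal

variable {W : Type*} [NormedAddCommGroup W] [InnerProductSpace ℂ W] {t₁ t₂ : W}

theorem curv_apply_of_inner_eq_zero (h12 : inner ℂ t₁ t₂ = 0) (s : W) :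
    curv t₁ t₂ s = inner ℂ t₁ s • t₂ - inner ℂ t₂ s • t₁ := by
  simp [curv, h12, inner_eq_zero_symm.mp h12]

theorem inner_smul_add_smul_eq_left (ht₁ : ‖t₁‖ = 1) (h12 : inner ℂ t₁ t₂ = 0) (z₁ z₂ : ℂ) :
    inner ℂ t₁ (z₁ • t₁ + z₂ • t₂) = z₁ := by
  simp [ht₁, h12]

theorem inner_smul_add_smul_eq_right (ht₂ : ‖t₂‖ = 1) (h12 : inner ℂ t₁ t₂ = 0) (z₁ z₂ : ℂ) :
    inner ℂ t₂ (z₁ • t₁ + z₂ • t₂) = z₂ := by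
  simp [ht₂, inner_eq_zero_symm.mp h12]

theorem eq_of_smul_add_smul_eq (ht₁ : ‖t₁‖ = 1) (ht₂ : ‖t₂‖ = 1) (h12 : inner ℂ t₁ t₂ = 0)
    {z₁ z₂ w₁ w₂ : ℂ} (h : z₁ • t₁ + z₂ • t₂ = w₁ • t₁ + w₂ • t₂) : z₁ = w₁ ∧ z₂ = w₂ := by
  constructor
  · simpa only [inner_smul_add_smul_eq_left ht₁ h12] using congrArg (inner ℂ t₁) h
  · simpa only [inner_smul_add_smul_eq_right ht₂ h12] using congrArg (inner ℂ t₂) h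

theorem curv_I_smul_add_I_smul (ht₁ : ‖t₁‖ = 1) (ht₂ : ‖t₂‖ = 1)
    (h12 : inner ℂ t₁ t₂ = 0) (a b : ℂ) :
    curv t₁ t₂ ((Complex.I * a) • t₁ + (Complex.I * b) • t₂) =
      (-(Complex.I * b)) • t₁ + (Complex.I * a) • t₂ := by
  rw [curv_apply_of_inner_eq_zero h12, inner_smul_add_smul_eq_left ht₁ h12,
    inner_smul_add_smul_eq_right ht₂ h12, neg_smul]
  abel

end Orthonormal

theorem stmt_7_general {W : Type*} [NormedAddCommGroup W] [InnerProductSpace ℂ W]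
    (t₁ t₂ : W) (ht₁ : ‖t₁‖ = 1) (ht₂ : ‖t₂‖ = 1) (h12 : (inner ℂ t₁ t₂ : ℂ) = 0)
    (a b : ℝ) (t₃ : W)
    (ht₃ : t₃ = (Complex.I * (a : ℂ)) • t₁ + (Complex.I * (b : ℂ)) • t₂)
    (c₁ c₂ c₃ : ℝ)
    (h1 : curv t₁ t₂ t₃ = (c₁ : ℂ) • t₁ + (c₂ : ℂ) • t₂ + (c₃ : ℂ) • t₃) :
    a = 0 ∧ b = 0 ∧ t₃ = 0 := by
  subst ht₃
  rw [curv_I_smul_add_I_smul ht₁ ht₂ h12] at h1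
  have hcoord : (-(Complex.I * b)) • t₁ + (Complex.I * a) • t₂ =
      (c₁ + c₃ * (Complex.I * a) : ℂ) • t₁ + (c₂ + c₃ * (Complex.I * b) : ℂ) • t₂ := by
    rw [h1]; module
  obtain ⟨h₁, h₂⟩ := eq_of_smul_add_smul_eq ht₁ ht₂ h12 hcoord
  have hb : -b = c₃ * a := by simpa using congrArg Complex.im h₁
  have ha : a = c₃ * b := by simpa using congrArg Complex.im h₂
  obtain ⟨rfl, rfl⟩ := eq_zero_of_eq_mul_of_neg_eq_mul ha hb
  simp

theorem stmt_7 {W : Type*} [NormedAddCommGroup W] [InnerProductSpace ℂ W]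
    (hdim : Module.finrank ℂ W = 2)
    (t₁ t₂ : W) (ht₁ : ‖t₁‖ = 1) (ht₂ : ‖t₂‖ = 1) (h12 : (inner ℂ t₁ t₂ : ℂ) = 0)
    (a b : ℝ) (t₃ : W)
    (ht₃ : t₃ = (Complex.I * (a : ℂ)) • t₁ + (Complex.I * (b : ℂ)) • t₂)
    (c₁ c₂ c₃ d₁ d₂ d₃ : ℝ)
    (h1 : curv t₁ t₂ t₃ = (c₁ : ℂ) • t₁ + (c₂ : ℂ) • t₂ + (c₃ : ℂ) • t₃)
    (h2 : curv t₁ t₃ t₁ = (d₁ : ℂ) • t₁ + (d₂ : ℂ) • t₂ + (d₃ : ℂ) • t₃) :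
    a = 0 ∧ b = 0 ∧ t₃ = 0 :=
  stmt_7_general t₁ t₂ ht₁ ht₂ h12 a b t₃ ht₃ c₁ c₂ c₃ h1
end

section
/- Let V = ℂ³ with Hermitian form ⟨x,y⟩ = -x₀ȳ₀ + x₁ȳ₁ + x₂ȳ₂, let v₁,v₂,u satisfy ⟨v₁,v₁⟩ = ⟨v₂,v₂⟩ = 0, ⟨v₁,v₂⟩ = 1/2, ⟨u,u⟩ = 1, ⟨u,v₁⟩ = ⟨u,v₂⟩ = 0, and let ε ∈ ℂ with Re(ε²) > 0, Im(ε²) ≠ 0, r = √(Re(ε²)), v₃ = ε v₁ − conj(ε) v₂ + r u, v₄ = 2Re(ε)(v₁ − v₂) − v₃, p = α v₃ − α⁻¹ ε v₂ for some α > 0. Then there is no c ∈ ℂ such that the vector x = c v₄ + p is a complex multiple of a vector in ℝv₁ ⊕ ℝv₂. -/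
lemma herm_add_left_s18 (x y z : Fin 3 → ℂ) : herm (x + y) z = herm x z + herm y z := by
  simp [herm]; ring

lemma herm_sub_left_s18 (x y z : Fin 3 → ℂ) : herm (x - y) z = herm x z - herm y z := by
  simp [herm]; ring

lemma herm_smul_left_s18 (a : ℂ) (x z : Fin 3 → ℂ) : herm (a • x) z = a * herm x z := by
  simp [herm]; ring

lemma herm_conj (x y : Fin 3 → ℂ) : herm y x = star (herm x y) := by
  simp [herm]; ring


/-- No point `c • v₄ + p` of the complex geodesic through `[p]` and `[v₄]`
is a complex multiple of a vector of `ℝv₁ ⊕ ℝv₂`: assuming so yields a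
contradiction. -/
theorem stmt_18 (v₁ v₂ u : Fin 3 → ℂ)
    (h11 : herm v₁ v₁ = 0) (h22 : herm v₂ v₂ = 0) (h12 : herm v₁ v₂ = 1 / 2)
    (huu : herm u u = 1) (hu1 : herm u v₁ = 0) (hu2 : herm u v₂ = 0)
    (ε : ℂ) (hε : 0 < (ε ^ 2).re) (hεim : (ε ^ 2).im ≠ 0)
    (r : ℝ) (hr : r = Real.sqrt ((ε ^ 2).re))
    (v₃ : Fin 3 → ℂ)
    (hv₃ : v₃ = ε • v₁ - (starRingEnd ℂ ε) • v₂ + (r : ℂ) • u)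
    (v₄ : Fin 3 → ℂ)
    (hv₄ : v₄ = ((2 * ε.re : ℝ) : ℂ) • (v₁ - v₂) - v₃)
    (α : ℝ) (hα : 0 < α)
    (p : Fin 3 → ℂ)
    (hp : p = (α : ℂ) • v₃ - (((α : ℂ))⁻¹ * ε) • v₂)
    (c lam : ℂ) (s t : ℝ)
    (hx : c • v₄ + p = lam • ((s : ℂ) • v₁ + (t : ℂ) • v₂)) :
    False := by
  -- basic real facts about ε
  have him : (ε ^ 2).im = 2 * ε.re * ε.im := by simp [Complex.sq_norm, pow_two, Complex.mul_im]; ring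
  have hre : ε.re ≠ 0 := by intro h; apply hεim; rw [him, h]; ring
  have himε : ε.im ≠ 0 := by intro h; apply hεim; rw [him, h]; ring
  have hr0 : 0 < r := by rw [hr]; exact Real.sqrt_pos.mpr hε
  have hα0 : (α : ℂ) ≠ 0 := Complex.ofReal_ne_zero.mpr hα.ne'
  -- conjugate values
  have h21 : herm v₂ v₁ = 1 / 2 := by rw [herm_conj, h12]; norm_num
  have h1u : herm v₁ u = 0 := by rw [herm_conj, hu1, star_zero]
  have h2u : herm v₂ u = 0 := by rw [herm_conj, hu2, star_zero]
  have key : ∀ w : Fin 3 → ℂ,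
      (c * ((2 * ε.re : ℝ) : ℂ) - c * ε + (α : ℂ) * ε) * herm v₁ w
      + (-(c * ((2 * ε.re : ℝ) : ℂ)) + c * (starRingEnd ℂ ε) - (α : ℂ) * (starRingEnd ℂ ε)
          - (α : ℂ)⁻¹ * ε) * herm v₂ w
      + ((α : ℂ) * r - c * r) * herm u w
      = lam * ((s : ℂ) * herm v₁ w + (t : ℂ) * herm v₂ w) := by
    intro w
    have := congrArg (fun y => herm y w) hx
    simp only [hv₄, hv₃, hp, herm_add_left_s18, herm_sub_left_s18, herm_smul_left_s18] at this
    linear_combination this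
  -- pair with u
  have ku := key u
  rw [huu, h1u, h2u] at ku
  have hc : c = (α : ℂ) := by
    have hrC : (r : ℂ) ≠ 0 := Complex.ofReal_ne_zero.mpr hr0.ne'
    have : ((α : ℂ) - c) * r = 0 := by linear_combination ku
    exact (sub_eq_zero.mp ((mul_eq_zero.mp this).resolve_right hrC)).symm
  -- pair with v₂ and v₁
  have k2 := key v₂
  rw [h12, h22, hu2] at k2
  have k1 := key v₁
  rw [h11, h21, hu1] at k1
  subst hc
  -- from k2 : lam * s = 2 α ε.re
  have hconj : (starRingEnd ℂ) ε = (ε.re : ℂ) - ε.im * Complex.I := by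
    simp [Complex.ext_iff]
  rw [hconj] at k1 k2
  field_simp at k1 k2
  have eA : lam * (s : ℂ) = 2 * (α : ℂ) * ε.re := by
    apply mul_left_cancel₀ hα0; push_cast at k2 ⊢; linear_combination -k2
  have eB : (α : ℂ) * (lam * (t : ℂ)) = -(2 * (α : ℂ) ^ 2 * ε.re) - ε := by
    push_cast at k1 ⊢; linear_combination -k1
  have eAre : lam.re * s = 2 * α * ε.re := by
    have := congrArg Complex.re eA
    simp [Complex.mul_re, Complex.mul_im] at this
    linarith
  have eAim : lam.im * s = 0 := by
    have := congrArg Complex.im eA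
    simp [Complex.mul_im, Complex.mul_re] at this
    rcases this with h | h <;> simp [h]
  have eBim : α * (lam.im * t) = -ε.im := by
    have := congrArg Complex.im eB
    simp [Complex.mul_im, Complex.mul_re, ← Complex.ofReal_pow] at this
    linarith
  have hs : s ≠ 0 := by
    intro h; rw [h, mul_zero] at eAre
    have : α * ε.re ≠ 0 := mul_ne_zero hα.ne' hre
    apply this; linarith
  have hlamim : lam.im = 0 := by
    rcases mul_eq_zero.mp eAim with h | h
    · exact h
    · exact absurd h hs
  rw [hlamim, zero_mul, mul_zero] at eBim
  exact himε (by linarith)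
end
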